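/- Let 0 < q < 1, let β satisfy √q ≤ β < 1, and let C ≥ 1/β. Let η₀ > 0 and define η_t = β^t·η₀. Let (a_t)_{t≥0} be a sequence of nonnegative reals such that for every t: (i) if η_t ≤ a_t ≤ C·η_t then a_{t+1} ≤ √q·a_t, and (ii) if a_t ≤ η_t then a_{t+1} ≤ a_t. If a₀ ≤ C·η₀, then a_t ≤ C·η_t = C·β^t·η₀ for every t ≥ 0. -/

import Mathlib

open Matrix BigOperators

noncomputable section

/-- Frobenius inner product `⟨A, B⟩ = tr(Aᵀ B)`. -/
def finner {a b : ℕ} (A B : Matrix (Fin a) (Fin b) ℝ) : ℝ := (Aᵀ * B).trace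

/-- Frobenius norm. -/
def fnorm {a b : ℕ} (A : Matrix (Fin a) (Fin b) ℝ) : ℝ :=
  Real.sqrt (∑ i, ∑ j, (A i j) ^ 2)

/-- Euclidean norm on ℝ^m. -/
def vnorm {m : ℕ} (v : Fin m → ℝ) : ℝ := Real.sqrt (∑ i, (v i) ^ 2)

/-- Euclidean inner product on ℝ^m. -/
def vinner {m : ℕ} (v w : Fin m → ℝ) : ℝ := ∑ i, v i * w i

/-- Measurement operator 𝒜(M)_i = ⟨A_i, M⟩. -/
def calA {n m : ℕ} (A : Fin m → Matrix (Fin n) (Fin n) ℝ)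
    (M : Matrix (Fin n) (Fin n) ℝ) : Fin m → ℝ :=
  fun i => finner (A i) M

/-- Restricted isometry property with parameters (k, δ). -/
def RIP {n m : ℕ} (A : Fin m → Matrix (Fin n) (Fin n) ℝ) (k : ℕ) (δ : ℝ) : Prop :=
  0 ≤ δ ∧ δ < 1 ∧ ∀ M : Matrix (Fin n) (Fin n) ℝ, M.rank ≤ k →
    (1 - δ) * fnorm M ^ 2 ≤ (1 / (m : ℝ)) * vnorm (calA A M) ^ 2 ∧
    (1 / (m : ℝ)) * vnorm (calA A M) ^ 2 ≤ (1 + δ) * fnorm M ^ 2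

/-- Noiseless loss. -/
def fc {n m r : ℕ} (A : Fin m → Matrix (Fin n) (Fin n) ℝ)
    (Mstar : Matrix (Fin n) (Fin n) ℝ) (X : Matrix (Fin n) (Fin r) ℝ) : ℝ :=
  (1 / (m : ℝ)) * vnorm (calA A (X * Xᵀ - Mstar)) ^ 2

/-- Noisy loss. -/
def fnoisy {n m r : ℕ} (A : Fin m → Matrix (Fin n) (Fin n) ℝ) (y : Fin m → ℝ)
    (X : Matrix (Fin n) (Fin r) ℝ) : ℝ :=
  (1 / (m : ℝ)) * vnorm (fun i => calA A (X * Xᵀ) i - y i) ^ 2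

/-- Gradient of the noisy loss. -/
def gradf {n m r : ℕ} (A : Fin m → Matrix (Fin n) (Fin n) ℝ) (y : Fin m → ℝ)
    (X : Matrix (Fin n) (Fin r) ℝ) : Matrix (Fin n) (Fin r) ℝ :=
  (4 / (m : ℝ)) • ∑ i, (finner (A i) (X * Xᵀ) - y i) • (A i * X)

/-- Gradient of the noiseless loss. -/
def gradfc {n m r : ℕ} (A : Fin m → Matrix (Fin n) (Fin n) ℝ)
    (Mstar : Matrix (Fin n) (Fin n) ℝ) (X : Matrix (Fin n) (Fin r) ℝ) :
    Matrix (Fin n) (Fin r) ℝ :=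
  (4 / (m : ℝ)) • ∑ i, finner (A i) (X * Xᵀ - Mstar) • (A i * X)

/-- Spectral (operator) norm. -/
def specNorm {n : ℕ} (B : Matrix (Fin n) (Fin n) ℝ) : ℝ :=
  sSup {c | ∃ v : Fin n → ℝ, vnorm v ≤ 1 ∧ c = vnorm (B.mulVec v)}

open scoped Classical in
/-- positive semidefinite square root (junk value 0 if not PSD). -/
def matSqrt {k : ℕ} (P : Matrix (Fin k) (Fin k) ℝ) : Matrix (Fin k) (Fin k) ℝ :=
  if h : P.PosSemidef then
    (h.1.eigenvectorUnitary : Matrix (Fin k) (Fin k) ℝ) *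
      diagonal ((RCLike.ofReal : ℝ → ℝ) ∘ Real.sqrt ∘ h.1.eigenvalues) *
      (star h.1.eigenvectorUnitary : Matrix (Fin k) (Fin k) ℝ)
  else 0

/-- P-norm. -/
def pnorm {a k : ℕ} (P : Matrix (Fin k) (Fin k) ℝ) (X : Matrix (Fin a) (Fin k) ℝ) : ℝ :=
  fnorm (X * matSqrt P)

/-- dual P-norm. -/
def pdnorm {a k : ℕ} (P : Matrix (Fin k) (Fin k) ℝ) (X : Matrix (Fin a) (Fin k) ℝ) : ℝ :=
  fnorm (X * (matSqrt P)⁻¹)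

/-- the preconditioner matrix XᵀX + ηI. -/
def Pmat {n r : ℕ} (X : Matrix (Fin n) (Fin r) ℝ) (η : ℝ) : Matrix (Fin r) (Fin r) ℝ :=
  Xᵀ * X + η • 1

/-- k-th largest eigenvalue (1-indexed) of a Hermitian matrix. -/
def lamK {n : ℕ} {M : Matrix (Fin n) (Fin n) ℝ} (hM : M.IsHermitian) (k : ℕ) : ℝ :=
  (((List.ofFn hM.eigenvalues).insertionSort (· ≥ ·)).getD (k - 1) 0)


theorem le_mul_of_contract_above_threshold {a η : ℕ → ℝ} {ρ β C : ℝ} (hβ : 0 ≤ β)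
    (hρβ : ρ ≤ β) (hCβ : 1 ≤ C * β) (ha : ∀ t, 0 ≤ a t) (hη : ∀ t, η (t + 1) = β * η t)
    (h1 : ∀ t, η t ≤ a t → a t ≤ C * η t → a (t + 1) ≤ ρ * a t)
    (h2 : ∀ t, a t ≤ η t → a (t + 1) ≤ a t) (h0 : a 0 ≤ C * η 0) :
    ∀ t, a t ≤ C * η t := by
  intro t
  induction t with
  | zero => exact h0
  | succ t ih =>
    rw [hη]
    rcases le_or_gt (a t) (η t) with below | above
    · have hη_nonneg : 0 ≤ η t := (ha t).trans below
      calc a (t + 1) ≤ a t := h2 t below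
        _ ≤ 1 * η t := by rwa [one_mul]
        _ ≤ C * β * η t := by gcongr
        _ = C * (β * η t) := by ring
    · calc a (t + 1) ≤ ρ * a t := h1 t above.le ih
        _ ≤ β * (C * η t) := mul_le_mul hρβ ih (ha t) hβ
        _ = C * (β * η t) := by ring

theorem coupling_lemma_general (q β C η₀ : ℝ) (hq0 : 0 < q)
    (hβl : Real.sqrt q ≤ β) (hC : 1 / β ≤ C)
    (a : ℕ → ℝ) (ha : ∀ t, 0 ≤ a t)
    (h1 : ∀ t, β ^ t * η₀ ≤ a t → a t ≤ C * (β ^ t * η₀) →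
      a (t + 1) ≤ Real.sqrt q * a t)
    (h2 : ∀ t, a t ≤ β ^ t * η₀ → a (t + 1) ≤ a t)
    (h0 : a 0 ≤ C * η₀) :
    ∀ t, a t ≤ C * (β ^ t * η₀) := by
  have hβ : 0 < β := (Real.sqrt_pos.2 hq0).trans_le hβl
  exact le_mul_of_contract_above_threshold (η := fun t => β ^ t * η₀) hβ.le hβl
    ((div_le_iff₀ hβ).1 hC) ha (fun t => by ring) h1 h2 (by simpa using h0)

/-- abstract coupling lemma for geometric decay. -/
theorem coupling_lemma (q β C η₀ : ℝ) (hq0 : 0 < q) (hq1 : q < 1)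
    (hβl : Real.sqrt q ≤ β) (hβu : β < 1) (hC : 1 / β ≤ C) (hη₀ : 0 < η₀)
    (a : ℕ → ℝ) (ha : ∀ t, 0 ≤ a t)
    (h1 : ∀ t, β ^ t * η₀ ≤ a t → a t ≤ C * (β ^ t * η₀) →
      a (t + 1) ≤ Real.sqrt q * a t)
    (h2 : ∀ t, a t ≤ β ^ t * η₀ → a (t + 1) ≤ a t)
    (h0 : a 0 ≤ C * η₀) :
    ∀ t, a t ≤ C * (β ^ t * η₀) :=
  coupling_lemma_general q β C η₀ hq0 hβl hC a ha h1 h2 h0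

end
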